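/- Star-shapedness of accessible Weyl channels: let Φ = exp(Σ_μ t_μ L_μ) with t_μ ≥ 0, where L_μ = U_μ ⊗ conj(U_μ) − I_{N²} are commuting Weyl Lindblad generators. Then for every m ∈ (0,1], the convex combination m·Φ + (1−m)·Φ_*, where Φ_* = (1/N²) Σ_μ U_μ ⊗ conj(U_μ) is the completely depolarizing superoperator, is also of the form exp(Σ_μ t'_μ L_μ) with t'_μ = t_μ − (log m)/N² ≥ 0. In particular Φ_* satisfies Φ_*² = Φ_* and Φ Φ_* = Φ_* for any such Φ. -/

import Mathlib

open Matrix Complex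
open scoped Kronecker

/-- The `N`-th root of unity `ω = exp(2πi/N)`. -/
noncomputable def omega (N : ℕ) : ℂ := Complex.exp (2 * Real.pi * Complex.I / N)

/-- The cyclic shift matrix `X` with `X |i⟩ = |i ⊕ 1⟩`. -/
def Xmat (N : ℕ) [NeZero N] : Matrix (Fin N) (Fin N) ℂ :=
  fun i j => if i = j + 1 then 1 else 0

/-- The clock matrix `Z = diag(1, ω, ..., ω^{N-1})`. -/
noncomputable def Zmat (N : ℕ) [NeZero N] : Matrix (Fin N) (Fin N) ℂ :=
  Matrix.diagonal (fun j => omega N ^ (j : ℕ))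

/-- The Weyl matrices `U_μ = X^k Z^l`, indexed by `μ = (k,l)`. -/
noncomputable def WeylU (N : ℕ) [NeZero N] (μ : Fin N × Fin N) : Matrix (Fin N) (Fin N) ℂ :=
  Xmat N ^ (μ.1 : ℕ) * Zmat N ^ (μ.2 : ℕ)

/-- The Weyl Lindblad generators `L_μ = U_μ ⊗ conj(U_μ) − I`. -/
noncomputable def weylLind (N : ℕ) [NeZero N] (μ : Fin N × Fin N) :
    Matrix (Fin N × Fin N) (Fin N × Fin N) ℂ :=
  WeylU N μ ⊗ₖ (WeylU N μ).map (starRingEnd ℂ) - 1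

/-- The completely depolarizing superoperator `Φ_* = (1/N²) Σ_μ U_μ ⊗ conj(U_μ)`. -/
noncomputable def depol (N : ℕ) [NeZero N] : Matrix (Fin N × Fin N) (Fin N × Fin N) ℂ :=
  ((N : ℂ) ^ 2)⁻¹ • ∑ μ : Fin N × Fin N, WeylU N μ ⊗ₖ (WeylU N μ).map (starRingEnd ℂ)

/-!
The superoperators `W_μ = U_μ ⊗ conj(U_μ)` form a representation of `(ℤ/N)²`: the phase
`ω^(lk')` in `U_μ U_ν = ω^(lk') U_(μ+ν)` cancels against its conjugate. So every `W_μ` fixes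
the group average `Φ_*` on both sides, making `Φ_*` idempotent and killed by each
`L_μ = W_μ - 1`, while `Σ_μ L_μ = N² (Φ_* - 1)`. Shifting every `t_μ` by `-(log m)/N²` thus
adds `log m • (1 - Φ_*)` to `S = Σ_μ t_μ L_μ`; this term commutes with `S`, and `1 - Φ_*` is
idempotent, so `exp (S + log m • (1 - Φ_*)) = exp S * (m • (1 - Φ_*) + Φ_*)`, which is
`m • exp S + (1 - m) • Φ_*`.
-/

open scoped Nat ComplexConjugate

namespace NormedSpace

theorem exp_mul_eq_self_of_mul_eq_zero {𝔸 : Type*} [NormedRing 𝔸] [NormedAlgebra ℚ 𝔸]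
    [CompleteSpace 𝔸] {a b : 𝔸} (h : a * b = 0) : NormedSpace.exp a * b = b := by
  have hterms : (fun n : ℕ => ((n !⁻¹ : ℚ) • a ^ n) * b) = fun n => if n = 0 then b else 0 := by
    funext n
    cases n with
    | zero => simp
    | succ n => simp [pow_succ, mul_assoc, h]
  have hsum := (NormedSpace.exp_series_hasSum_exp' (𝕂 := ℚ) a).mul_right b
  rw [hterms] at hsum
  exact hsum.unique (hasSum_ite_eq 0 b)

section RCLike
variable {𝕂 𝔸 : Type*} [RCLike 𝕂] [NormedRing 𝔸] [NormedAlgebra 𝕂 𝔸] [CompleteSpace 𝔸]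

theorem _root_.IsIdempotentElem.exp_smul {q : 𝔸} (hq : IsIdempotentElem q) (z : 𝕂) :
    NormedSpace.exp (z • q) = NormedSpace.exp z • q + (1 - q) := by
  have hterms : (fun n : ℕ => (n !⁻¹ : 𝕂) • (z • q) ^ n)
      = fun n => ((n !⁻¹ : 𝕂) • z ^ n) • q + if n = 0 then 1 - q else 0 := by
    funext n
    cases n with
    | zero => simp
    | succ n => simp [smul_pow, hq.pow_succ_eq, smul_smul]
  have hsum := NormedSpace.exp_series_hasSum_exp' (𝕂 := 𝕂) (z • q)
  rw [hterms] at hsum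
  exact hsum.unique
    (((NormedSpace.exp_series_hasSum_exp' z).smul_const q).add (hasSum_ite_eq 0 (1 - q)))

theorem exp_add_smul_one_sub {s p : 𝔸} (hp : IsIdempotentElem p) (hsp : s * p = 0)
    (hps : p * s = 0) (c : 𝕂) :
    NormedSpace.exp (s + c • (1 - p))
      = NormedSpace.exp c • NormedSpace.exp s + (1 - NormedSpace.exp c) • p := by
  let _ := NormedAlgebra.restrictScalars ℚ 𝕂 𝔸
  have hcomm : Commute s (c • (1 - p)) :=
    ((Commute.one_right s).sub_right (hsp.trans hps.symm)).smul_right c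
  rw [NormedSpace.exp_add_of_commute hcomm, hp.one_sub.exp_smul]
  simp only [mul_add, mul_smul_comm, mul_sub, mul_one, exp_mul_eq_self_of_mul_eq_zero hsp]
  module

end RCLike

end NormedSpace

namespace Matrix

theorem kronecker_map_star_mul_of_mul_eq_smul {R l m n : Type*} [CommRing R] [StarRing R]
    [Fintype m] {A : Matrix l m R} {B : Matrix m n R} {C : Matrix l n R} {c : R}
    (hc : c * starRingEnd R c = 1) (h : A * B = c • C) :
    (A ⊗ₖ A.map (starRingEnd R)) * (B ⊗ₖ B.map (starRingEnd R)) = C ⊗ₖ C.map (starRingEnd R) := by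
  rw [← mul_kronecker_mul, ← Matrix.map_mul (f := starRingEnd R), h,
    Matrix.map_smulₛₗ _ (starRingEnd R) c (fun a => map_mul _ c a), smul_kronecker, kronecker_smul,
    smul_smul, hc, one_smul]

variable {n 𝕂 : Type*} [Fintype n] [DecidableEq n] [RCLike 𝕂]

theorem exp_mul_eq_self_of_mul_eq_zero {A B : Matrix n n 𝕂} (h : A * B = 0) :
    NormedSpace.exp A * B = B :=
  open scoped Norms.Operator in NormedSpace.exp_mul_eq_self_of_mul_eq_zero h

theorem exp_add_smul_one_sub {S P : Matrix n n 𝕂} (hP : IsIdempotentElem P) (hSP : S * P = 0)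
    (hPS : P * S = 0) (c : 𝕂) :
    NormedSpace.exp (S + c • (1 - P))
      = NormedSpace.exp c • NormedSpace.exp S + (1 - NormedSpace.exp c) • P :=
  open scoped Norms.Operator in NormedSpace.exp_add_smul_one_sub hP hSP hPS c

end Matrix

section GroupAverage
variable {G A : Type*} [AddGroup G] [Fintype G] [Ring A] (𝕜 : Type*) [Field 𝕜] [Algebra 𝕜 A]

noncomputable def groupAverage (W : G → A) : A :=
  (Fintype.card G : 𝕜)⁻¹ • ∑ μ, W μ

variable {𝕜} {W : G → A}

theorem mul_groupAverage (hW : ∀ μ ν, W (μ + ν) = W μ * W ν) (μ : G) :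
    W μ * groupAverage 𝕜 W = groupAverage 𝕜 W := by
  rw [groupAverage, mul_smul_comm, Finset.mul_sum]
  simp only [← hW]
  exact congrArg _ (Equiv.sum_comp (Equiv.addLeft μ) W)

theorem groupAverage_mul (hW : ∀ μ ν, W (μ + ν) = W μ * W ν) (μ : G) :
    groupAverage 𝕜 W * W μ = groupAverage 𝕜 W := by
  rw [groupAverage, smul_mul_assoc, Finset.sum_mul]
  simp only [← hW]
  exact congrArg _ (Equiv.sum_comp (Equiv.addRight μ) W)

theorem sum_smul_sub_one_mul_groupAverage (hW : ∀ μ ν, W (μ + ν) = W μ * W ν) (c : G → 𝕜) :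
    (∑ μ, c μ • (W μ - 1)) * groupAverage 𝕜 W = 0 := by
  simp [Finset.sum_mul, sub_mul, mul_groupAverage hW]

theorem groupAverage_mul_sum_smul_sub_one (hW : ∀ μ ν, W (μ + ν) = W μ * W ν) (c : G → 𝕜) :
    groupAverage 𝕜 W * ∑ μ, c μ • (W μ - 1) = 0 := by
  simp [Finset.mul_sum, mul_sub, groupAverage_mul hW]

variable [CharZero 𝕜]

theorem isIdempotentElem_groupAverage (hW : ∀ μ ν, W (μ + ν) = W μ * W ν) :
    IsIdempotentElem (groupAverage 𝕜 W) := by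
  have hcard : (Fintype.card G : 𝕜) ≠ 0 := Nat.cast_ne_zero.2 Fintype.card_ne_zero
  rw [IsIdempotentElem]
  nth_rewrite 1 [groupAverage]
  rw [smul_mul_assoc, Finset.sum_mul]
  simp only [mul_groupAverage hW]
  rw [Finset.sum_const, Finset.card_univ, ← Nat.cast_smul_eq_nsmul 𝕜, smul_smul,
    inv_mul_cancel₀ hcard, one_smul]

theorem sum_sub_one_eq_card_smul (W : G → A) :
    ∑ μ, (W μ - 1) = (Fintype.card G : 𝕜) • (groupAverage 𝕜 W - 1) := by
  have hcard : (Fintype.card G : 𝕜) ≠ 0 := Nat.cast_ne_zero.2 Fintype.card_ne_zero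
  rw [groupAverage, smul_sub, smul_smul, mul_inv_cancel₀ hcard, one_smul, Finset.sum_sub_distrib,
    Finset.sum_const, Finset.card_univ, Nat.cast_smul_eq_nsmul]

end GroupAverage

theorem pow_val_add_of_pow_eq_one {M : Type*} [Monoid M] {N : ℕ} [NeZero N] {x : M}
    (hx : x ^ N = 1) (a b : Fin N) : x ^ ((a + b : Fin N) : ℕ) = x ^ (a : ℕ) * x ^ (b : ℕ) := by
  rw [Fin.val_add, ← pow_eq_pow_mod _ hx, pow_add]

theorem omega_mul_conj (N : ℕ) : omega N * conj (omega N) = 1 := by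
  rw [omega, ← Complex.exp_conj, ← Complex.exp_add, ← Complex.exp_zero]
  simp [map_div₀, Complex.conj_I, map_ofNat, neg_div]

section Weyl
variable (N : ℕ) [NeZero N]

theorem omega_pow_self : omega N ^ N = 1 := by
  rw [omega, ← Complex.exp_nat_mul, mul_div_cancel₀ _ (NeZero.ne (N : ℂ))]
  simp

theorem Xmat_eq_permMatrixHom : Xmat N = permMatrixHom (R := ℂ) (Equiv.addRight 1) := by
  ext i j
  simp [Xmat, PEquiv.toMatrix_apply, add_neg_eq_iff_eq_add]

open Fin.CommRing in
theorem Xmat_pow_self : Xmat N ^ N = 1 := by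
  rw [Xmat_eq_permMatrixHom, ← map_pow]
  simp

theorem Zmat_pow_self : Zmat N ^ N = 1 := by
  rw [Zmat, diagonal_pow, ← diagonal_one]
  congr 1
  ext j
  rw [Pi.pow_apply, pow_right_comm, omega_pow_self, one_pow]

theorem Zmat_mul_Xmat : Zmat N * Xmat N = omega N • (Xmat N * Zmat N) := by
  ext i j
  simp only [Matrix.smul_apply, smul_eq_mul, Zmat, diagonal_mul, mul_diagonal, Xmat]
  split_ifs with h
  · subst h
    rw [pow_val_add_of_pow_eq_one (omega_pow_self N), Fin.val_one',
      ← pow_eq_pow_mod _ (omega_pow_self N)]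
    ring
  · simp

theorem Zmat_pow_mul_Xmat (l : ℕ) :
    Zmat N ^ l * Xmat N = omega N ^ l • (Xmat N * Zmat N ^ l) := by
  induction l with
  | zero => simp
  | succ l ih =>
    rw [pow_succ, mul_assoc, Zmat_mul_Xmat, mul_smul_comm, ← mul_assoc, ih, smul_mul_assoc,
      smul_smul, mul_assoc, ← pow_succ, ← pow_succ']

theorem Zmat_pow_mul_Xmat_pow (l k : ℕ) :
    Zmat N ^ l * Xmat N ^ k = omega N ^ (l * k) • (Xmat N ^ k * Zmat N ^ l) := by
  induction k with
  | zero => simp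
  | succ k ih =>
    rw [pow_succ, ← mul_assoc, ih, smul_mul_assoc, mul_assoc, Zmat_pow_mul_Xmat, mul_smul_comm,
      smul_smul, ← pow_add, ← mul_assoc, ← pow_succ, Nat.mul_succ]

theorem WeylU_mul (μ ν : Fin N × Fin N) :
    WeylU N μ * WeylU N ν = omega N ^ ((μ.2 : ℕ) * (ν.1 : ℕ)) • WeylU N (μ + ν) := by
  simp only [WeylU, Prod.fst_add, Prod.snd_add, pow_val_add_of_pow_eq_one (Xmat_pow_self N),
    pow_val_add_of_pow_eq_one (Zmat_pow_self N)]
  rw [mul_assoc, ← mul_assoc (Zmat N ^ _), Zmat_pow_mul_Xmat_pow, smul_mul_assoc, mul_smul_comm,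
    mul_assoc, mul_assoc]

noncomputable def weylSuperop (μ : Fin N × Fin N) : Matrix (Fin N × Fin N) (Fin N × Fin N) ℂ :=
  WeylU N μ ⊗ₖ (WeylU N μ).map (starRingEnd ℂ)

theorem weylSuperop_add (μ ν : Fin N × Fin N) :
    weylSuperop N (μ + ν) = weylSuperop N μ * weylSuperop N ν :=
  (kronecker_map_star_mul_of_mul_eq_smul
    (by rw [map_pow, ← mul_pow, omega_mul_conj, one_pow]) (WeylU_mul N μ ν)).symm

theorem depol_eq_groupAverage : depol N = groupAverage ℂ (weylSuperop N) := by
  simp [depol, groupAverage, weylSuperop, sq]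

theorem sum_sub_smul_weylLind (s : Fin N × Fin N → ℂ) (c : ℂ) :
    ∑ μ, (s μ - c / (N : ℂ) ^ 2) • weylLind N μ
      = ∑ μ, s μ • weylLind N μ + c • (1 - depol N) := by
  have hsum : ∑ μ, weylLind N μ = (N : ℂ) ^ 2 • (depol N - 1) := by
    have h := sum_sub_one_eq_card_smul (𝕜 := ℂ) (weylSuperop N)
    rwa [Fintype.card_prod, Fintype.card_fin, Nat.cast_mul, ← sq, ← depol_eq_groupAverage] at h
  simp only [sub_smul, Finset.sum_sub_distrib, ← Finset.smul_sum, hsum, smul_smul,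
    div_mul_cancel₀ _ (pow_ne_zero 2 (NeZero.ne (N : ℂ)))]
  module

end Weyl

/-- Star-shapedness of accessible Weyl channels: for `Φ = exp(Σ_μ t_μ L_μ)` with
`t_μ ≥ 0` and `m ∈ (0,1]`, the mixture `m Φ + (1−m) Φ_*` equals
`exp(Σ_μ t'_μ L_μ)` with `t'_μ = t_μ − (log m)/N² ≥ 0`. Moreover `Φ_*² = Φ_*` and
`Φ Φ_* = Φ_*`. -/
theorem accessible_star_shaped (N : ℕ) [NeZero N] (t : Fin N × Fin N → ℝ)
    (ht : ∀ μ, 0 ≤ t μ) (m : ℝ) (hm0 : 0 < m) (hm1 : m ≤ 1) :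
    (∀ μ, 0 ≤ t μ - Real.log m / (N : ℝ) ^ 2) ∧
    (m : ℂ) • NormedSpace.exp (∑ μ, (t μ : ℂ) • weylLind N μ) + ((1 : ℂ) - m) • depol N
      = NormedSpace.exp (∑ μ, ((t μ - Real.log m / (N : ℝ) ^ 2 : ℝ) : ℂ) • weylLind N μ) ∧
    depol N * depol N = depol N ∧
    NormedSpace.exp (∑ μ, (t μ : ℂ) • weylLind N μ) * depol N = depol N := by
  have hW := weylSuperop_add N
  have hP : IsIdempotentElem (depol N) := by
    rw [depol_eq_groupAverage]; exact isIdempotentElem_groupAverage hW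
  set S := ∑ μ, (t μ : ℂ) • weylLind N μ
  have hSP : S * depol N = 0 := by
    rw [depol_eq_groupAverage]; exact sum_smul_sub_one_mul_groupAverage hW _
  have hPS : depol N * S = 0 := by
    rw [depol_eq_groupAverage]; exact groupAverage_mul_sum_smul_sub_one hW _
  have hshift : Real.log m / (N : ℝ) ^ 2 ≤ 0 :=
    div_nonpos_of_nonpos_of_nonneg (Real.log_nonpos hm0.le hm1) (by positivity)
  refine ⟨fun μ => by linarith [ht μ], ?_, hP, Matrix.exp_mul_eq_self_of_mul_eq_zero hSP⟩
  have hgen : ∑ μ, ((t μ - Real.log m / (N : ℝ) ^ 2 : ℝ) : ℂ) • weylLind N μ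
      = S + (Real.log m : ℂ) • (1 - depol N) := by
    push_cast
    exact sum_sub_smul_weylLind N _ _
  rw [hgen, Matrix.exp_add_smul_one_sub hP hSP hPS, ← Complex.exp_eq_exp_ℂ, ← Complex.ofReal_exp,
    Real.exp_log hm0]
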